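/- The system (★) admits a solution in positive real numbers α_1, …, α_n if and only if either β ∈ (β̄, μ_1) ∪ (μ_n, ∞), or β = μ_1 = μ_2 = … = μ_n. -/
import Mathlib

lemma gmono_aux (n : ℕ) (hn : 2 ≤ n) (μ : Fin n → ℝ) (hμpos : ∀ k, 0 < μ k)
    (β1 β2 : ℝ) (h12 : β1 < β2) (h2 : ∀ k, β2 < μ k) :
    1 + β1 * ∑ k, 1 / (μ k - β1) < 1 + β2 * ∑ k, 1 / (μ k - β2) := by
  have : Nonempty (Fin n) := ⟨⟨0, by omega⟩⟩
  have key : ∑ k, β1 / (μ k - β1) < ∑ k, β2 / (μ k - β2) := by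
    apply Finset.sum_lt_sum_of_nonempty Finset.univ_nonempty
    intro k _
    have h1 : 0 < μ k - β1 := by linarith [h2 k]
    have h2' : 0 < μ k - β2 := by linarith [h2 k]
    rw [div_lt_div_iff₀ h1 h2']
    nlinarith [hμpos k]
  have e1 : β1 * ∑ k, 1 / (μ k - β1) = ∑ k, β1 / (μ k - β1) := by
    rw [Finset.mul_sum]; exact Finset.sum_congr rfl fun k _ => mul_one_div _ _
  have e2 : β2 * ∑ k, 1 / (μ k - β2) = ∑ k, β2 / (μ k - β2) := by
    rw [Finset.mul_sum]; exact Finset.sum_congr rfl fun k _ => mul_one_div _ _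
  rw [e1, e2]; linarith

lemma construct_aux (n : ℕ) (hn : 2 ≤ n) (μ : Fin n → ℝ) (g : ℝ → ℝ)
    (hg : ∀ β : ℝ, g β = 1 + β * ∑ k, 1 / (μ k - β)) (β : ℝ)
    (hpos : ∀ j, 0 < g β * (μ j - β)) :
    ∃ α : Fin n → ℝ, (∀ j, 0 < α j) ∧
      ∀ j, μ j * α j ^ 2 + β * ∑ k ∈ Finset.univ.erase j, α k ^ 2 = 1 := by
  have hgne : g β ≠ 0 := by
    intro h
    have := hpos ⟨0, by omega⟩
    rw [h] at this; simp at this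
  have hne : ∀ j, μ j - β ≠ 0 := by
    intro j h
    have := hpos j
    rw [h] at this; simp at this
  refine ⟨fun j => Real.sqrt (g β * (μ j - β))⁻¹, ?_, ?_⟩
  · intro j
    exact Real.sqrt_pos.mpr (inv_pos.mpr (hpos j))
  · intro j
    have hsq : ∀ k, (Real.sqrt (g β * (μ k - β))⁻¹) ^ 2 = (g β * (μ k - β))⁻¹ := by
      intro k
      exact Real.sq_sqrt (le_of_lt (inv_pos.mpr (hpos k)))
    simp only [hsq]
    rw [Finset.sum_erase_eq_sub (Finset.mem_univ j)]
    have hsum : ∑ k, (g β * (μ k - β))⁻¹ = (g β)⁻¹ * ∑ k, 1 / (μ k - β) := by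
      rw [Finset.mul_sum]
      refine Finset.sum_congr rfl fun k _ => ?_
      rw [mul_inv, one_div]
    rw [hsum]
    have hj := hne j
    have key : μ j * (g β * (μ j - β))⁻¹ +
        β * ((g β)⁻¹ * (∑ k, 1 / (μ k - β)) - (g β * (μ j - β))⁻¹) =
        (g β)⁻¹ * (1 + β * ∑ k, 1 / (μ k - β)) := by
      field_simp
      ring
    rw [key, ← hg β, inv_mul_cancel₀ hgne]

lemma equal_aux (n : ℕ) (hn : 2 ≤ n) (μ : Fin n → ℝ) (β : ℝ) (hβ : 0 < β)
    (hall : ∀ j, μ j = β) :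
    ∃ α : Fin n → ℝ, (∀ j, 0 < α j) ∧
      ∀ j, μ j * α j ^ 2 + β * ∑ k ∈ Finset.univ.erase j, α k ^ 2 = 1 := by
  have hn0 : (0:ℝ) < (n:ℝ) := by positivity
  refine ⟨fun _ => Real.sqrt (1/((n:ℝ)*β)), fun j => Real.sqrt_pos.mpr (by positivity),
    fun j => ?_⟩
  have hc : (Real.sqrt (1/((n:ℝ)*β)))^2 = 1/((n:ℝ)*β) := Real.sq_sqrt (by positivity)
  simp only [hc]
  rw [Finset.sum_const, Finset.card_erase_of_mem (Finset.mem_univ j), Finset.card_univ,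
    Fintype.card_fin, hall j, nsmul_eq_mul]
  have hcast : ((n-1 : ℕ):ℝ) = (n:ℝ) - 1 := by
    rw [Nat.cast_sub (by omega)]; simp
  rw [hcast]
  field_simp
  ring

/-- The system `μ_j α_j² + β ∑_{k ≠ j} α_k² = 1 (j = 1,…,n)` admits a solution
in positive reals if and only if either `β ∈ (β̄, μ 0) ∪ (μ (n-1), ∞)`, or
`β = μ_1 = μ_2 = … = μ_n`. -/
theorem stmt_7 (n : ℕ) (hn : 2 ≤ n) (μ : Fin n → ℝ) (hμpos : ∀ k, 0 < μ k)
    (hμmono : Monotone μ) (g : ℝ → ℝ)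
    (hg : ∀ β : ℝ, g β = 1 + β * ∑ k, 1 / (μ k - β))
    (βbar : ℝ) (hβbar : βbar < 0) (hβbarzero : g βbar = 0)
    (β : ℝ) :
    (∃ α : Fin n → ℝ, (∀ j, 0 < α j) ∧
        ∀ j, μ j * α j ^ 2 + β * ∑ k ∈ Finset.univ.erase j, α k ^ 2 = 1) ↔
      (β ∈ Set.Ioo βbar (μ ⟨0, by omega⟩) ∪ Set.Ioi (μ ⟨n - 1, by omega⟩) ∨
        (β = μ ⟨0, by omega⟩ ∧ ∀ j, μ j = β)) := by
  simp only [Set.mem_union, Set.mem_Ioo, Set.mem_Ioi]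
  have hle0 : ∀ k : Fin n, μ ⟨0, by omega⟩ ≤ μ k := fun k =>
    hμmono (by simp [Fin.le_def])
  have hlen : ∀ k : Fin n, μ k ≤ μ ⟨n - 1, by omega⟩ := fun k =>
    hμmono (by simp [Fin.le_def]; omega)
  constructor
  · rintro ⟨α, hα, heq⟩
    set S := ∑ k, α k ^ 2 with hSdef
    have heq' : ∀ j, (μ j - β) * α j ^ 2 + β * S = 1 := by
      intro j
      have h := heq j
      rw [Finset.sum_erase_eq_sub (Finset.mem_univ j)] at h
      linear_combination h
    by_cases hall : ∀ j, μ j = β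
    · exact Or.inr ⟨(hall _).symm, hall⟩
    · left
      push_neg at hall
      obtain ⟨j0, hj0⟩ := hall
      have htne : 1 - β * S ≠ 0 := by
        intro h0
        have h := heq' j0
        have hz : (μ j0 - β) * α j0 ^ 2 = 0 := by linarith
        rcases mul_eq_zero.mp hz with h | h
        · exact hj0 (by linarith)
        · exact (pow_ne_zero 2 (ne_of_gt (hα j0))) h
      have hne : ∀ j, μ j ≠ β := by
        intro j h
        apply htne
        have := heq' j
        rw [h] at this
        linarith [this]
      have hαsq : ∀ j, α j ^ 2 = (1 - β * S) / (μ j - β) := by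
        intro j
        rw [eq_div_iff (sub_ne_zero.mpr (hne j))]
        linear_combination heq' j
      rcases htne.lt_or_gt with ht | ht
      · -- 1 - β S < 0 : all μ j < β, so β > μ (n-1)
        right
        have hlt : ∀ j, μ j < β := by
          intro j
          by_contra h
          push_neg at h
          have hd : 0 < μ j - β := lt_of_le_of_ne (by linarith) (fun h' => hne j (by linarith))
          have hp : 0 < (μ j - β) * α j ^ 2 := mul_pos hd (pow_pos (hα j) 2)
          linarith [heq' j]
        exact lt_of_le_of_lt (le_refl _) (hlt _)
      · -- 1 - β S > 0 : all μ j > β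
        left
        have hlt : ∀ j, β < μ j := by
          intro j
          by_contra h
          push_neg at h
          have hd : μ j - β < 0 := by
            rcases lt_or_eq_of_le h with h' | h'
            · linarith
            · exact absurd h' (hne j)
          have hp : (μ j - β) * α j ^ 2 < 0 := mul_neg_of_neg_of_pos hd (pow_pos (hα j) 2)
          linarith [heq' j]
        refine ⟨?_, hlt _⟩
        -- derive g β > 0
        have hS : S = (1 - β * S) * ∑ k, 1 / (μ k - β) := by
          rw [hSdef, Finset.mul_sum]
          refine Finset.sum_congr rfl fun k _ => ?_
          rw [hαsq k, div_eq_mul_one_div]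
        have htg : (1 - β * S) * g β = 1 := by
          rw [hg β]
          linear_combination (-β) * hS
        have hgpos : 0 < g β := by nlinarith
        by_contra h
        push_neg at h
        rcases eq_or_lt_of_le h with h' | h'
        · rw [← h'] at hβbarzero; linarith
        · have := gmono_aux n hn μ hμpos β βbar h' (fun k => lt_trans hβbar (hμpos k))
          rw [← hg β, ← hg βbar, hβbarzero] at this
          linarith
  · rintro ((⟨h1, h2⟩ | h1) | ⟨hb, hall⟩)
    · -- βbar < β < μ 0
      apply construct_aux n hn μ g hg β
      have hlt : ∀ k, β < μ k := fun k => lt_of_lt_of_le h2 (hle0 k)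
      have hgpos : 0 < g β := by
        have := gmono_aux n hn μ hμpos βbar β h1 hlt
        rw [← hg β, ← hg βbar, hβbarzero] at this
        linarith
      exact fun j => mul_pos hgpos (sub_pos.mpr (hlt j))
    · -- β > μ (n-1)
      apply construct_aux n hn μ g hg β
      have hltk : ∀ k, μ k < β := fun k => lt_of_le_of_lt (hlen k) h1
      have hβpos : 0 < β := lt_trans (hμpos _) h1
      have hgneg : g β < 0 := by
        have : Nonempty (Fin n) := ⟨⟨0, by omega⟩⟩
        have hterm : ∑ k, β / (μ k - β) < ∑ _k : Fin n, (-1 : ℝ) := by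
          apply Finset.sum_lt_sum_of_nonempty Finset.univ_nonempty
          intro k _
          have hd : μ k - β < 0 := by linarith [hltk k]
          rw [div_lt_iff_of_neg hd]
          linarith [hμpos k]
        have hconst : ∑ _k : Fin n, (-1 : ℝ) = -(n:ℝ) := by
          rw [Finset.sum_const, Finset.card_univ, Fintype.card_fin, nsmul_eq_mul]
          ring
        have hmul : β * ∑ k, 1 / (μ k - β) = ∑ k, β / (μ k - β) := by
          rw [Finset.mul_sum]
          exact Finset.sum_congr rfl fun k _ => mul_one_div _ _
        rw [hg β, hmul]
        have hncast : (2:ℝ) ≤ (n:ℝ) := by exact_mod_cast hn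
        rw [hconst] at hterm
        linarith
      exact fun j => mul_pos_of_neg_of_neg hgneg (by linarith [hltk j])
    · exact equal_aux n hn μ β (hb ▸ hμpos ⟨0, by omega⟩) hall
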